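/- Let R be an L×L real non-singular upper triangular matrix with pairwise distinct diagonal entries, let p_{i,j,k} denote its power factors, let e, q₀ ∈ ℝ^L, let f_opt > 0, and define c_k := (Σ_{i=1}^{L} Σ_{j=i}^{L} e_i p_{i,j,k} q₀(j))/f_opt for k = 1, …, L. Then for every integer t ≥ 1, the expected fitness value F_t := f_opt − eᵀ R^t q₀ satisfies F_t = f_opt (1 − Σ_{k=1}^{L} c_k (λ_k)^{t-1}), where λ_k = r_{k,k}. -/

import Mathlib

open Matrix Finset

/-- The power factors `p i j k` of a matrix with entries `r i j`
(indices `1, …, L`), defined recursively by: `p j j j = r j j`;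
`p i j k = 0` if `k < i` or `k > j`;
`p i j k = (∑ l = k to j-1, p i l k * r l j) / (r k k - r j j)` for `i ≤ k < j`;
`p i j j = r i j - ∑ l = i to j-1, p i j l` for `i < j`. -/
noncomputable def powerFactor (r : ℕ → ℕ → ℝ) : ℕ → ℕ → ℕ → ℝ
  | i, j, k =>
    if _h0 : k < i ∨ j < k then 0
    else if _h1 : k < j then
      (∑ l ∈ (Finset.Icc k (j - 1)).attach,
        powerFactor r i l.1 k * r l.1 j) / (r k k - r j j)
    else if _h2 : i < j then
      r i j - ∑ l ∈ (Finset.Icc i (j - 1)).attach, powerFactor r i j l.1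
    else r j j
termination_by i j k => (j, k)
decreasing_by
  · have := Finset.mem_Icc.mp l.2
    exact Prod.Lex.left _ _ (by omega)
  · have := Finset.mem_Icc.mp l.2
    exact Prod.Lex.right _ (by omega)

/-!
For fixed `k` let `P k` be the matrix `(p i j k)_{i,j}`. The defining recursion of the power
factors makes every row of `P k` a left eigenvector of `R` for `λ k = r k k`, i.e.
`P k * R = λ k • P k`, while the diagonal case makes the `P k` sum to `R`. Hence
`R ^ t = ∑ k, λ k ^ (t - 1) • P k`, and `eᵀ R^t q₀` is read off term by term.
-/

section PowerFactor

variable {r : ℕ → ℕ → ℝ} {i j k : ℕ}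

theorem powerFactor_eq_zero (h : k < i ∨ j < k) : powerFactor r i j k = 0 := by
  rw [powerFactor, dif_pos h]

theorem powerFactor_eq_zero_of_lt (h : j < i) : powerFactor r i j k = 0 :=
  powerFactor_eq_zero (by omega)

theorem powerFactor_of_le_of_lt (hik : i ≤ k) (hkj : k < j) :
    powerFactor r i j k =
      (∑ l ∈ Icc k (j - 1), powerFactor r i l k * r l j) / (r k k - r j j) := by
  rw [powerFactor, dif_neg (by omega), dif_pos hkj,
    sum_attach (Icc k (j - 1)) fun l => powerFactor r i l k * r l j]

theorem powerFactor_diag_of_lt (h : i < j) :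
    powerFactor r i j j = r i j - ∑ l ∈ Icc i (j - 1), powerFactor r i j l := by
  rw [powerFactor, dif_neg (by omega), dif_neg (by omega), dif_pos h,
    sum_attach (Icc i (j - 1)) fun l => powerFactor r i j l]

theorem powerFactor_self : powerFactor r j j j = r j j := by
  rw [powerFactor, dif_neg (by omega), dif_neg (by omega), dif_neg (by omega)]

theorem sum_powerFactor (h : i ≤ j) : ∑ k ∈ Icc i j, powerFactor r i j k = r i j := by
  rcases h.eq_or_lt with rfl | h
  · simp [powerFactor_self]
  · rw [← insert_Icc_sub_one_right_eq_Icc h.le, sum_insert (by simp; omega),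
      powerFactor_diag_of_lt h]
    ring

theorem sum_powerFactor_mul (hdist : k < j → r k k ≠ r j j) :
    ∑ l ∈ Icc k j, powerFactor r i l k * r l j = powerFactor r i j k * r k k := by
  rcases lt_trichotomy k j with hkj | rfl | hjk
  · rw [← insert_Icc_sub_one_right_eq_Icc hkj.le, sum_insert (by simp; omega)]
    rcases lt_or_ge k i with hki | hik
    · simp [powerFactor_eq_zero (Or.inl hki)]
    · have hne : r k k - r j j ≠ 0 := sub_ne_zero.mpr (hdist hkj)
      rw [powerFactor_of_le_of_lt hik hkj]
      field_simp
      ring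
  · simp
  · simp [Icc_eq_empty_of_lt hjk, powerFactor_eq_zero (Or.inr hjk)]

end PowerFactor

theorem Fin.sum_univ_eq_sum_Icc_one {M : Type*} [AddCommMonoid M] (L : ℕ) (f : ℕ → M) :
    ∑ a : Fin L, f (a + 1) = ∑ m ∈ Icc 1 L, f m := by
  rw [Fin.sum_univ_eq_sum_range (fun a => f (a + 1)), range_eq_Ico, sum_Ico_add',
    zero_add, Ico_add_one_right_eq_Icc]

def shiftMatrix (L : ℕ) (m : ℕ → ℕ → ℝ) : Matrix (Fin L) (Fin L) ℝ :=
  Matrix.of fun a b => m (a + 1) (b + 1)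

theorem dotProduct_shiftMatrix_mulVec (L : ℕ) (m : ℕ → ℕ → ℝ) (e q : ℕ → ℝ) :
    (fun a : Fin L => e (a + 1)) ⬝ᵥ (shiftMatrix L m *ᵥ fun a => q (a + 1)) =
      ∑ i ∈ Icc 1 L, ∑ j ∈ Icc 1 L, e i * m i j * q j := by
  simp only [dotProduct, mulVec, shiftMatrix, of_apply, mul_sum]
  rw [← Fin.sum_univ_eq_sum_Icc_one L fun i => ∑ j ∈ Icc 1 L, e i * m i j * q j]
  refine sum_congr rfl fun a _ => ?_
  rw [← Fin.sum_univ_eq_sum_Icc_one L fun j => e (a + 1) * m (a + 1) j * q j]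
  simp only [mul_assoc]

noncomputable def powerFactorMatrix (L : ℕ) (r : ℕ → ℕ → ℝ) (k : ℕ) :
    Matrix (Fin L) (Fin L) ℝ :=
  shiftMatrix L fun i j => powerFactor r i j k

section UpperTriangular

variable {L : ℕ} {r : ℕ → ℕ → ℝ}
  (htri : ∀ i j, 1 ≤ i → i ≤ L → 1 ≤ j → j ≤ L → j < i → r i j = 0)
  (hdist : ∀ i j, 1 ≤ i → i ≤ L → 1 ≤ j → j ≤ L → i ≠ j → r i i ≠ r j j)

include htri in
theorem sum_powerFactorMatrix :
    ∑ k ∈ Icc 1 L, powerFactorMatrix L r k = shiftMatrix L r := by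
  ext a b
  simp only [Matrix.sum_apply, powerFactorMatrix, shiftMatrix, of_apply]
  rcases le_or_gt (a.1 + 1) (b.1 + 1) with hab | hba
  · rw [← sum_powerFactor (r := r) hab]
    refine (sum_subset (Icc_subset_Icc (by omega) (by omega)) fun k _ hk => ?_).symm
    exact powerFactor_eq_zero (by simp at hk; omega)
  · rw [htri _ _ (by omega) a.2 (by omega) b.2 hba]
    exact sum_eq_zero fun k _ => powerFactor_eq_zero_of_lt hba

include htri hdist in
theorem powerFactorMatrix_mul {k : ℕ} (hk : k ∈ Icc 1 L) :
    powerFactorMatrix L r k * shiftMatrix L r = r k k • powerFactorMatrix L r k := by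
  ext a b
  obtain ⟨hk1, hkL⟩ := mem_Icc.mp hk
  simp only [mul_apply, Matrix.smul_apply, powerFactorMatrix, shiftMatrix, of_apply,
    smul_eq_mul]
  rw [Fin.sum_univ_eq_sum_Icc_one L fun l => powerFactor r (a + 1) l k * r l (b + 1),
    mul_comm, ← sum_powerFactor_mul fun hkb => hdist k _ hk1 hkL (by omega) b.2 hkb.ne]
  refine (sum_subset (Icc_subset_Icc hk1 b.2) fun l hl hl' => ?_).symm
  simp only [mem_Icc] at hl hl'
  rcases lt_or_ge l k with hlk | hkl
  · rw [powerFactor_eq_zero (Or.inr hlk), zero_mul]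
  · rw [htri l _ hl.1 hl.2 (by omega) b.2 (by omega), mul_zero]

include htri hdist in
theorem pow_eq_sum_powerFactorMatrix {t : ℕ} (ht : 1 ≤ t) :
    shiftMatrix L r ^ t = ∑ k ∈ Icc 1 L, r k k ^ (t - 1) • powerFactorMatrix L r k := by
  induction t, ht using Nat.le_induction with
  | base => simp [sum_powerFactorMatrix htri]
  | succ t ht ih =>
    rw [pow_succ, ih, sum_mul]
    refine sum_congr rfl fun k hk => ?_
    rw [smul_mul_assoc, powerFactorMatrix_mul htri hdist hk, smul_smul, ← pow_succ,
      Nat.sub_add_cancel ht, Nat.add_sub_cancel]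

end UpperTriangular

theorem dotProduct_powerFactorMatrix_mulVec (L : ℕ) (r : ℕ → ℕ → ℝ) (e q : ℕ → ℝ) (k : ℕ) :
    (fun a : Fin L => e (a + 1)) ⬝ᵥ (powerFactorMatrix L r k *ᵥ fun a => q (a + 1)) =
      ∑ i ∈ Icc 1 L, ∑ j ∈ Icc i L, e i * powerFactor r i j k * q j := by
  rw [powerFactorMatrix, dotProduct_shiftMatrix_mulVec]
  refine sum_congr rfl fun i hi => (sum_subset (Icc_subset_Icc (mem_Icc.mp hi).1 le_rfl)
    fun j hj hj' => ?_).symm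
  simp only [mem_Icc] at hj hj'
  rw [powerFactor_eq_zero_of_lt (by omega), mul_zero, zero_mul]

theorem fitness_value_closed_form_general
    (L : ℕ) (r : ℕ → ℕ → ℝ)
    (htri : ∀ i j, 1 ≤ i → i ≤ L → 1 ≤ j → j ≤ L → j < i → r i j = 0)
    (hdist : ∀ i j, 1 ≤ i → i ≤ L → 1 ≤ j → j ≤ L → i ≠ j → r i i ≠ r j j)
    (R : Matrix (Fin L) (Fin L) ℝ)
    (hR : R = Matrix.of fun a b : Fin L => r (a.val + 1) (b.val + 1))
    (e q₀ : ℕ → ℝ) (fopt : ℝ) (hfopt : 0 < fopt)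
    (F : ℕ → ℝ)
    (hF : ∀ t : ℕ, F t = fopt -
      ((fun a : Fin L => e (a.val + 1)) ⬝ᵥ
        ((R ^ t) *ᵥ fun a : Fin L => q₀ (a.val + 1))))
    (c : ℕ → ℝ)
    (hc : ∀ k, c k =
      (∑ i ∈ Finset.Icc 1 L, ∑ j ∈ Finset.Icc i L,
        e i * powerFactor r i j k * q₀ j) / fopt) :
    ∀ t : ℕ, 1 ≤ t →
      F t = fopt * (1 - ∑ k ∈ Finset.Icc 1 L, c k * (r k k) ^ (t - 1)) := by
  intro t ht
  obtain rfl : R = shiftMatrix L r := hR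
  rw [hF, pow_eq_sum_powerFactorMatrix htri hdist ht, sum_mulVec, dotProduct_sum, mul_sub,
    mul_one, mul_sum]
  congr 1
  refine sum_congr rfl fun k _ => ?_
  rw [smul_mulVec, dotProduct_smul, dotProduct_powerFactorMatrix_mulVec, hc, smul_eq_mul]
  field_simp

/-- Corollary 1: under the same setting as Theorem 1, the
expected fitness value `F t = f_opt − eᵀ R^t q₀` satisfies, for every `t ≥ 1`,
`F t = f_opt * (1 − ∑_{k=1}^{L} c k * (λ k)^(t-1))` where `λ k = r k k`. -/
theorem fitness_value_closed_form
    (L : ℕ) (hL : 1 ≤ L) (r : ℕ → ℕ → ℝ)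
    (htri : ∀ i j, 1 ≤ i → i ≤ L → 1 ≤ j → j ≤ L → j < i → r i j = 0)
    (hnonsing : ∀ i, 1 ≤ i → i ≤ L → r i i ≠ 0)
    (hdist : ∀ i j, 1 ≤ i → i ≤ L → 1 ≤ j → j ≤ L → i ≠ j → r i i ≠ r j j)
    (R : Matrix (Fin L) (Fin L) ℝ)
    (hR : R = Matrix.of fun a b : Fin L => r (a.val + 1) (b.val + 1))
    (e q₀ : ℕ → ℝ) (fopt : ℝ) (hfopt : 0 < fopt)
    (F : ℕ → ℝ)
    (hF : ∀ t : ℕ, F t = fopt -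
      ((fun a : Fin L => e (a.val + 1)) ⬝ᵥ
        ((R ^ t) *ᵥ fun a : Fin L => q₀ (a.val + 1))))
    (c : ℕ → ℝ)
    (hc : ∀ k, c k =
      (∑ i ∈ Finset.Icc 1 L, ∑ j ∈ Finset.Icc i L,
        e i * powerFactor r i j k * q₀ j) / fopt) :
    ∀ t : ℕ, 1 ≤ t →
      F t = fopt * (1 - ∑ k ∈ Finset.Icc 1 L, c k * (r k k) ^ (t - 1)) :=
  fitness_value_closed_form_general L r htri hdist R hR e q₀ fopt hfopt F hF c hc
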